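/- arXiv:1812.09101 — 4 statements merged into one kernel-verified Lean document; each statement's English description precedes it below -/
import Mathlib

section
/- Let p be a prime with p ≥ 5. Then the sum ∑_{j=1}^{(p−1)/2} 1/j² ≡ 0 (mod p), where the reciprocals are taken in the field ℤ/pℤ (or equivalently, the numerator of the rational number ∑_{j=1}^{(p−1)/2} 1/j² is divisible by p). -/
theorem sum_inv_sq_half (p : ℕ) (hp : p.Prime) (hp5 : 5 ≤ p) :
    ∑ j ∈ Finset.Icc 1 ((p - 1) / 2), ((j : ZMod p)⁻¹) ^ 2 = 0 := by
  haveI : Fact p.Prime := ⟨hp⟩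
  set m := (p - 1) / 2 with hm
  have hodd : Odd p := hp.odd_of_ne_two (by omega)
  obtain ⟨k, hk⟩ := hodd
  have hmk : m = k := by omega
  -- full sum over the field is 0
  have hfield : ∑ x : ZMod p, x ^ 2 = 0 := by
    apply FiniteField.sum_pow_lt_card_sub_one
    rw [ZMod.card]; omega
  have hinv : ∑ x : ZMod p, (x⁻¹) ^ 2 = 0 := by
    rw [← hfield]
    exact Finset.sum_nbij' (fun x => x⁻¹) (fun x => x⁻¹)
      (fun _ _ => Finset.mem_univ _) (fun _ _ => Finset.mem_univ _)
      (fun x _ => inv_inv x) (fun x _ => inv_inv x) (fun x _ => rfl)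
  -- full sum over range p
  have hrange : ∑ j ∈ Finset.range p, ((j : ZMod p)⁻¹) ^ 2 = 0 := by
    rw [← hinv]
    exact Finset.sum_nbij' (fun j => (j : ZMod p)) (fun x => x.val)
      (fun _ _ => Finset.mem_univ _)
      (fun x _ => Finset.mem_range.mpr (ZMod.val_lt x))
      (fun j hj => by
        show ((j : ZMod p)).val = j
        exact ZMod.val_natCast_of_lt (Finset.mem_range.mp hj))
      (fun x _ => by show ((x.val : ℕ) : ZMod p) = x; simp)
      (fun j _ => rfl)
  -- range p = {0} ∪ Icc 1 (p-1)
  have hsplit0 : ∑ j ∈ Finset.range p, ((j : ZMod p)⁻¹) ^ 2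
      = ∑ j ∈ Finset.Icc 1 (p - 1), ((j : ZMod p)⁻¹) ^ 2 := by
    have h1 : Finset.range p = insert 0 (Finset.Icc 1 (p - 1)) := by
      ext j; simp [Finset.mem_range, Finset.mem_Icc]; omega
    rw [h1, Finset.sum_insert (by simp)]
    simp
  -- reflection: sum over Icc (m+1) (p-1) equals sum over Icc 1 m
  have hrefl : ∑ j ∈ Finset.Icc (m + 1) (p - 1), ((j : ZMod p)⁻¹) ^ 2
      = ∑ j ∈ Finset.Icc 1 m, ((j : ZMod p)⁻¹) ^ 2 := by
    apply Finset.sum_nbij' (fun j => p - j) (fun j => p - j)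
    · intro j hj; simp only [Finset.mem_Icc] at *; omega
    · intro j hj; simp only [Finset.mem_Icc] at *; omega
    · intro j hj; simp only [Finset.mem_Icc] at hj; omega
    · intro j hj; simp only [Finset.mem_Icc] at hj; omega
    · intro j hj
      simp only [Finset.mem_Icc] at hj
      have : ((p - j : ℕ) : ZMod p) = -(j : ZMod p) := by
        have : ((p - j : ℕ) : ZMod p) = ((p : ℕ) : ZMod p) - (j : ZMod p) :=
          Nat.cast_sub (by omega)
        rw [this, ZMod.natCast_self, zero_sub]
      rw [this, inv_neg, neg_pow, Even.neg_one_pow (by norm_num), one_mul]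
  have hsplit : ∑ j ∈ Finset.Icc 1 (p - 1), ((j : ZMod p)⁻¹) ^ 2
      = 2 * ∑ j ∈ Finset.Icc 1 m, ((j : ZMod p)⁻¹) ^ 2 := by
    have h2 : Finset.Icc 1 (p - 1) = Finset.Icc 1 m ∪ Finset.Icc (m + 1) (p - 1) := by
      ext j; simp [Finset.mem_Icc, Finset.mem_union]; omega
    rw [h2, Finset.sum_union (by
      simp only [Finset.disjoint_left, Finset.mem_Icc]; omega), hrefl]
    ring
  have h2ne : (2 : ZMod p) ≠ 0 := by
    intro h
    have : ((2 : ℕ) : ZMod p) = 0 := by exact_mod_cast h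
    rw [ZMod.natCast_eq_zero_iff] at this
    have := Nat.le_of_dvd (by norm_num) this
    omega
  have := hrange
  rw [hsplit0, hsplit] at this
  exact (mul_eq_zero.mp this).resolve_left h2ne
end

section
/- Let p ≥ 5 be a prime. Then the rational number ∏_{j=1}^{(p−1)/2} (1 − p²/(4j²)) is congruent to 1 modulo p³, i.e., its p-adic valuation of (product − 1) is at least 3. -/
/-!
Write each factor as `1 + f j` with `f j = -p²/(4j²)`, so `‖f j‖ = p⁻²`. By the ultrametric
inequality, `∏ (1 + f j) - 1` differs from `∑ f j` by terms of norm at most `p⁻⁴`, and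
`∑ f j = -(p²/4) ∑ j⁻²`. The last sum vanishes mod `p`: as `x ↦ x⁻²` is even on `ZMod p`,
twice it equals `∑ₓ x⁻² = ∑ₓ x² = 0`, the power sum vanishing because `2 < p - 1`.
-/

open Finset

theorem norm_prod_one_add_sub_one_add_sum_le {ι R : Type*} [NormedCommRing R]
    [IsUltrametricDist R] {s : Finset ι} {f : ι → R} {ε : ℝ} (hε : ε ≤ 1)
    (hf : ∀ i ∈ s, ‖f i‖ ≤ ε) :
    ‖∏ i ∈ s, (1 + f i) - (1 + ∑ i ∈ s, f i)‖ ≤ ε ^ 2 := by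
  induction s using Finset.cons_induction with
  | empty => simp [sq_nonneg]
  | cons i s hi ih =>
    have hfi : ‖f i‖ ≤ ε := hf i (mem_cons_self i s)
    have hfs : ∀ j ∈ s, ‖f j‖ ≤ ε := fun j hj => hf j (mem_cons_of_mem hj)
    have hε0 : 0 ≤ ε := (norm_nonneg _).trans hfi
    set E := ∏ j ∈ s, (1 + f j) - (1 + ∑ j ∈ s, f j)
    have hE := ih hfs
    have hsum : ‖∑ j ∈ s, f j‖ ≤ ε :=
      IsUltrametricDist.norm_sum_le_of_forall_le_of_nonneg hε0 hfs
    have hsplit : ∏ j ∈ cons i s hi, (1 + f j) - (1 + ∑ j ∈ cons i s hi, f j)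
        = E + (f i * ∑ j ∈ s, f j + f i * E) := by
      rw [prod_cons, sum_cons]; ring
    rw [hsplit]
    refine (IsUltrametricDist.norm_add_le_max _ _).trans (max_le hE ?_)
    refine (IsUltrametricDist.norm_add_le_max _ _).trans (max_le ?_ ?_)
    · exact (norm_mul_le _ _).trans (by nlinarith [norm_nonneg (f i)])
    · exact (norm_mul_le _ _).trans (by nlinarith [norm_nonneg (f i), norm_nonneg E])

theorem norm_prod_one_add_sub_one_le_max {ι R : Type*} [NormedCommRing R]
    [IsUltrametricDist R] {s : Finset ι} {f : ι → R} {ε : ℝ} (hε : ε ≤ 1)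
    (hf : ∀ i ∈ s, ‖f i‖ ≤ ε) :
    ‖∏ i ∈ s, (1 + f i) - 1‖ ≤ max (ε ^ 2) ‖∑ i ∈ s, f i‖ := by
  rw [← sub_add_cancel (∏ i ∈ s, (1 + f i)) (1 + ∑ i ∈ s, f i), add_sub_assoc, add_sub_cancel_left]
  exact (IsUltrametricDist.norm_add_le_max _ _).trans
    (max_le_max_right _ (norm_prod_one_add_sub_one_add_sum_le hε hf))

theorem ZMod.sum_univ_eq_sum_range {n : ℕ} [NeZero n] {M : Type*} [AddCommMonoid M]
    (g : ZMod n → M) : ∑ x : ZMod n, g x = ∑ j ∈ range n, g j := by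
  refine sum_nbij' ZMod.val (fun j => j) (fun x _ => mem_range.2 x.val_lt) (fun _ _ => mem_univ _)
    (fun x _ => ZMod.natCast_zmod_val x) (fun j hj => ZMod.val_natCast_of_lt (mem_range.1 hj))
    (fun x _ => by rw [ZMod.natCast_zmod_val])

theorem ZMod.sum_univ_eq_add_two_nsmul_sum_Icc {n : ℕ} [NeZero n] (hn : Odd n) {M : Type*}
    [AddCommMonoid M] {g : ZMod n → M} (hg : ∀ x, g (-x) = g x) :
    ∑ x : ZMod n, g x = g 0 + 2 • ∑ j ∈ Icc 1 ((n - 1) / 2), g j := by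
  obtain ⟨m, rfl⟩ := hn
  have hm : (2 * m + 1 - 1) / 2 = m := by omega
  have hreflect : ∑ j ∈ Ico (m + 1) (2 * m + 1), g j = ∑ j ∈ Ico 1 (m + 1), g j := by
    have h := sum_Ico_reflect (fun j => g j) (m + 1) (m := 2 * m + 1) (n := 2 * m + 1) (by omega)
    rw [show 2 * m + 1 + 1 - (2 * m + 1) = 1 by omega,
      show 2 * m + 1 + 1 - (m + 1) = m + 1 by omega] at h
    rw [← h]
    refine sum_congr rfl fun j hj => ?_
    rw [← hg, Nat.cast_sub (mem_Ico.1 hj).2.le, ZMod.natCast_self, zero_sub]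
  rw [ZMod.sum_univ_eq_sum_range, sum_range_eq_add_Ico _ (by omega),
    ← sum_Ico_consecutive _ (by omega : 1 ≤ m + 1) (by omega : m + 1 ≤ 2 * m + 1), hreflect, hm,
    Ico_add_one_right_eq_Icc, Nat.cast_zero, two_nsmul]

theorem FiniteField.sum_inv_pow_eq_zero {K : Type*} [Field K] [Fintype K] {i : ℕ}
    (hi : i < Fintype.card K - 1) : ∑ x : K, (x ^ i)⁻¹ = 0 := by
  simp_rw [← inv_pow]
  exact (Equiv.sum_comp (Equiv.inv K) (· ^ i)).trans
    (FiniteField.sum_pow_lt_card_sub_one (K := K) i hi)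

theorem ZMod.sum_Icc_inv_sq_eq_zero {p : ℕ} [Fact p.Prime] (hp5 : 5 ≤ p) :
    ∑ j ∈ Icc 1 ((p - 1) / 2), ((j : ZMod p) ^ 2)⁻¹ = 0 := by
  have hodd : Odd p := (Fact.out : p.Prime).odd_of_ne_two (by omega)
  have htwo : (2 : ZMod p) ≠ 0 :=
    Ring.two_ne_zero (by rw [ZMod.ringChar_zmod_n]; omega)
  have hall := FiniteField.sum_inv_pow_eq_zero (K := ZMod p) (i := 2) (by rw [ZMod.card]; omega)
  -- the `x = 0` term drops out since `0⁻¹ = 0`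
  rw [ZMod.sum_univ_eq_add_two_nsmul_sum_Icc hodd (g := fun x => (x ^ 2)⁻¹) (by simp),
    zero_pow two_ne_zero, inv_zero, zero_add, nsmul_eq_mul, Nat.cast_two] at hall
  exact (mul_eq_zero.1 hall).resolve_left htwo

namespace PadicInt

variable {p : ℕ} [Fact p.Prime]

theorem map_inv_of_norm_eq_one {K : Type*} [DivisionRing K] (f : ℤ_[p] →+* K) {z : ℤ_[p]}
    (hz : ‖z‖ = 1) : f z.inv = (f z)⁻¹ :=
  eq_inv_of_mul_eq_one_right (by rw [← map_mul, mul_inv hz, map_one])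

theorem norm_le_inv_of_toZMod_eq_zero {x : ℤ_[p]} (hx : toZMod x = 0) : ‖x‖ ≤ (p : ℝ)⁻¹ := by
  have hlt : ‖x‖ < 1 := by
    rw [← RingHom.mem_ker, ker_toZMod, IsLocalRing.mem_maximalIdeal, mem_nonunits] at hx
    exact hx
  simpa using (norm_le_pow_iff_norm_lt_pow_add_one x (-1)).2 (by simpa using hlt)

end PadicInt

theorem Nat.coprime_of_mem_Icc_half {p j : ℕ} (hp : p.Prime) (hj : j ∈ Icc 1 ((p - 1) / 2)) :
    p.Coprime j :=
  Nat.coprime_of_lt_prime (by grind) (by grind) hp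

theorem Padic.norm_sum_Icc_inv_sq_le {p : ℕ} [Fact p.Prime] (hp5 : 5 ≤ p) :
    ‖∑ j ∈ Icc 1 ((p - 1) / 2), ((j : ℚ_[p]) ^ 2)⁻¹‖ ≤ (p : ℝ)⁻¹ := by
  have hunit : ∀ j ∈ Icc 1 ((p - 1) / 2), ‖(j : ℤ_[p])‖ = 1 := fun j hj =>
    PadicInt.norm_natCast_eq_one_iff.2 (Nat.coprime_of_mem_Icc_half Fact.out hj)
  set T : ℤ_[p] := ∑ j ∈ Icc 1 ((p - 1) / 2), (j : ℤ_[p]).inv ^ 2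
  have hT : (T : ℚ_[p]) = ∑ j ∈ Icc 1 ((p - 1) / 2), ((j : ℚ_[p]) ^ 2)⁻¹ := by
    change PadicInt.Coe.ringHom T = _
    simp_rw [T, map_sum, map_pow]
    refine sum_congr rfl fun j hj => ?_
    rw [PadicInt.map_inv_of_norm_eq_one _ (hunit j hj), map_natCast, inv_pow]
  have hT0 : PadicInt.toZMod T = 0 := by
    simp_rw [T, map_sum, map_pow]
    rw [← ZMod.sum_Icc_inv_sq_eq_zero hp5]
    refine sum_congr rfl fun j hj => ?_
    rw [PadicInt.map_inv_of_norm_eq_one _ (hunit j hj), map_natCast, inv_pow]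
  rw [← hT, ← PadicInt.norm_def]
  exact PadicInt.norm_le_inv_of_toZMod_eq_zero hT0

theorem prod_congr_one_mod_p_cubed (p : ℕ) [hp : Fact p.Prime] (hp5 : 5 ≤ p) :
    ‖(∏ j ∈ Finset.Icc 1 ((p - 1) / 2), (1 - (p : ℚ_[p]) ^ 2 / (4 * (j : ℚ_[p]) ^ 2))) - 1‖
      ≤ (p : ℝ) ^ (-3 : ℤ) := by
  set c : ℚ_[p] := (p : ℚ_[p]) ^ 2 / 4
  have hc : ‖c‖ = (p : ℝ) ^ (-2 : ℤ) := by
    have h4 : ‖(4 : ℚ_[p])‖ = 1 := by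
      exact_mod_cast Padic.norm_natCast_eq_one_iff.2
        (Nat.coprime_of_lt_prime (n := 4) (by norm_num) (by omega) hp.out)
    rw [norm_div, Padic.norm_p_pow, h4, div_one]; rfl
  have hterm : ∀ j : ℕ,
      1 - (p : ℚ_[p]) ^ 2 / (4 * (j : ℚ_[p]) ^ 2) = 1 + -(c * ((j : ℚ_[p]) ^ 2)⁻¹) :=
    fun j => by ring
  have hf : ∀ j ∈ Icc 1 ((p - 1) / 2), ‖-(c * ((j : ℚ_[p]) ^ 2)⁻¹)‖ ≤ (p : ℝ) ^ (-2 : ℤ) := by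
    intro j hj
    rw [norm_neg, norm_mul, norm_inv, norm_pow,
      Padic.norm_natCast_eq_one_iff.2 (Nat.coprime_of_mem_Icc_half hp.out hj), hc]
    simp
  have hsum : ‖∑ j ∈ Icc 1 ((p - 1) / 2), -(c * ((j : ℚ_[p]) ^ 2)⁻¹)‖ ≤ (p : ℝ) ^ (-3 : ℤ) := by
    rw [sum_neg_distrib, ← mul_sum, norm_neg, norm_mul, hc,
      show (-3 : ℤ) = -2 + -1 by norm_num, zpow_add₀ (by positivity), zpow_neg_one]
    gcongr
    exact Padic.norm_sum_Icc_inv_sq_le hp5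
  have hp1 : (1 : ℝ) ≤ p := by exact_mod_cast hp.out.one_le
  have hε : (p : ℝ) ^ (-2 : ℤ) ≤ 1 := zpow_le_one_of_nonpos₀ hp1 (by norm_num)
  simp_rw [hterm]
  refine (norm_prod_one_add_sub_one_le_max hε hf).trans (max_le ?_ hsum)
  rw [← zpow_natCast, ← zpow_mul]
  exact zpow_le_zpow_right₀ hp1 (by norm_num)
end

section
/- Let p ≥ 5 be a prime. Then (1 + p/2)_{(p−1)/2} · (1 − p/2)_{(p−1)/2} / ((1)_{(p−1)/2})² ≡ 1 (mod p³), where (a)_n denotes the rising factorial a(a+1)⋯(a+n−1) and the quotient is a rational number with denominator coprime to p. -/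
open Finset

private lemma asc_eval_prod {K : Type*} [CommSemiring K] (n : ℕ) (x : K) :
    (ascPochhammer K n).eval x = ∏ i ∈ Finset.range n, (x + i) := by
  induction n with
  | zero => simp
  | succ n ih => rw [ascPochhammer_succ_eval, ih, Finset.prod_range_succ]

private lemma zmod_inv_sq_sum (p : ℕ) [hp : Fact p.Prime] (hp5 : 5 ≤ p) :
    ∑ i ∈ Finset.range ((p - 1) / 2), ((1 + (i : ZMod p))⁻¹) ^ 2 = 0 := by
  set n := (p - 1) / 2 with hn
  have hodd : p % 2 = 1 := Nat.odd_iff.mp (hp.out.odd_of_ne_two (by omega))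
  have hpn : p = 2 * n + 1 := by omega
  set F : ℕ → ZMod p := fun k => ((k : ZMod p))⁻¹ ^ 2 with hF
  -- full sum over ZMod p is 0
  have hA : ∑ x : ZMod p, (x⁻¹) ^ 2 = 0 := by
    have h2 : (2 : ℕ) < Fintype.card (ZMod p) - 1 := by rw [ZMod.card]; omega
    have := FiniteField.sum_pow_lt_card_sub_one (ZMod p) 2 h2
    rw [← this]
    exact Equiv.sum_comp (Equiv.inv (ZMod p)) (fun x => x ^ 2)
  -- sum over range p equals sum over ZMod p
  have hbij : ∑ k ∈ Finset.range p, F k = ∑ x : ZMod p, (x⁻¹) ^ 2 := by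
    refine Finset.sum_nbij' (fun k => (k : ZMod p)) ZMod.val
      (fun a _ => Finset.mem_univ _)
      (fun x _ => Finset.mem_range.mpr (ZMod.val_lt x))
      (fun a ha => ZMod.val_natCast_of_lt (Finset.mem_range.mp ha))
      (fun x _ => ZMod.natCast_zmod_val x)
      (fun a _ => rfl)
  have hA' : ∑ k ∈ Finset.range p, F k = 0 := by rw [hbij, hA]
  -- split
  have hsplit : ∑ k ∈ Finset.range p, F k
      = F 0 + (∑ i ∈ Finset.range n, F (i + 1) + ∑ i ∈ Finset.range n, F (n + i + 1)) := by
    rw [congrArg Finset.range hpn, Finset.sum_range_succ' F (2 * n), two_mul,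
      Finset.sum_range_add, add_comm]
  have hF0 : F 0 = 0 := by simp [hF]
  have hrefl : ∑ i ∈ Finset.range n, F (n + i + 1) = ∑ i ∈ Finset.range n, F (i + 1) := by
    rw [← Finset.sum_range_reflect (fun i => F (n + i + 1)) n]
    apply Finset.sum_congr rfl
    intro i hi
    have hi' : i < n := Finset.mem_range.mp hi
    have h1 : n + (n - 1 - i) + 1 = 2 * n - i := by omega
    rw [h1]
    have h2 : ((2 * n - i : ℕ) : ZMod p) = -(((i + 1 : ℕ) : ZMod p)) := by
      have : (2 * n - i) + (i + 1) = p := by omega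
      have := congrArg (Nat.cast : ℕ → ZMod p) this
      push_cast at this ⊢
      rw [ZMod.natCast_self] at this
      linear_combination this
    simp only [hF, h2, inv_neg, neg_sq]
  have hhalf : (2 : ZMod p) * ∑ i ∈ Finset.range n, F (i + 1) = 0 := by
    have := hA'
    rw [hsplit, hF0, hrefl, zero_add] at this
    linear_combination this
  have h2ne : (2 : ZMod p) ≠ 0 := by
    have : ((2 : ℕ) : ZMod p) ≠ 0 := by
      rw [Ne, ZMod.natCast_eq_zero_iff]
      intro h
      have := Nat.le_of_dvd (by norm_num) h
      omega
    simpa using this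
  have hfin : ∑ i ∈ Finset.range n, F (i + 1) = 0 := by
    rcases mul_eq_zero.mp hhalf with h | h
    · exact absurd h h2ne
    · exact h
  rw [← hfin]
  apply Finset.sum_congr rfl
  intro i _
  simp only [hF]
  norm_num [add_comm]

private lemma norm_natCast_eq_one (p : ℕ) [hp : Fact p.Prime] (k : ℕ) (h : ¬ p ∣ k) :
    ‖(k : ℚ_[p])‖ = 1 := by
  have hle : ‖((k : ℤ) : ℚ_[p])‖ ≤ 1 := Padic.norm_int_le_one _
  have hlt : ¬ ‖((k : ℤ) : ℚ_[p])‖ < 1 := by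
    rw [Padic.norm_intCast_lt_one_iff]
    exact_mod_cast h
  push_cast at hle hlt
  linarith [lt_or_ge ‖(k : ℚ_[p])‖ 1]

private lemma prod_one_add_remainder {p : ℕ} [hp : Fact p.Prime] {ι : Type*}
    (s : Finset ι) (u : ι → ℚ_[p]) (ε : ℝ) (hε0 : 0 ≤ ε) (hε1 : ε ≤ 1)
    (h : ∀ i ∈ s, ‖u i‖ ≤ ε) :
    ‖∏ i ∈ s, (1 + u i) - (1 + ∑ i ∈ s, u i)‖ ≤ ε ^ 2 := by
  classical
  induction s using Finset.cons_induction with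
  | empty => simpa using sq_nonneg ε
  | cons a s ha ih =>
    have hs : ∀ i ∈ s, ‖u i‖ ≤ ε := fun i hi => h i (Finset.mem_cons_of_mem hi)
    have hR := ih hs
    have hSs : ‖∑ i ∈ s, u i‖ ≤ ε :=
      IsUltrametricDist.norm_sum_le_of_forall_le_of_nonneg hε0 hs
    have hua : ‖u a‖ ≤ ε := h a (Finset.mem_cons_self a s)
    rw [Finset.prod_cons, Finset.sum_cons]
    set R := ∏ i ∈ s, (1 + u i) - (1 + ∑ i ∈ s, u i) with hRdef
    have key : (1 + u a) * ∏ i ∈ s, (1 + u i) - (1 + (u a + ∑ i ∈ s, u i))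
        = u a * ∑ i ∈ s, u i + (R + u a * R) := by
      rw [hRdef]; ring
    rw [key]
    have h1 : ‖u a * ∑ i ∈ s, u i‖ ≤ ε ^ 2 := by
      rw [norm_mul, sq]
      exact mul_le_mul hua hSs (norm_nonneg _) hε0
    have h2 : ‖u a * R‖ ≤ ε ^ 2 := by
      rw [norm_mul]
      calc ‖u a‖ * ‖R‖ ≤ 1 * ε ^ 2 := by
            apply mul_le_mul (hua.trans hε1) hR (norm_nonneg _) (by norm_num)
        _ = ε ^ 2 := one_mul _
    have h3 : ‖R + u a * R‖ ≤ ε ^ 2 :=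
      le_trans (Padic.nonarchimedean _ _) (max_le hR h2)
    exact le_trans (Padic.nonarchimedean _ _) (max_le h1 h3)

theorem pochhammer_quotient_congr_one (p : ℕ) [hp : Fact p.Prime] (hp5 : 5 ≤ p) :
    ‖((((ascPochhammer ℚ ((p - 1) / 2)).eval (1 + (p : ℚ) / 2) *
        (ascPochhammer ℚ ((p - 1) / 2)).eval (1 - (p : ℚ) / 2) /
        ((ascPochhammer ℚ ((p - 1) / 2)).eval 1) ^ 2 : ℚ)) : ℚ_[p]) - 1‖
      ≤ (p : ℝ) ^ (-3 : ℤ) := by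
  set n := (p - 1) / 2 with hn
  have hodd : p % 2 = 1 := Nat.odd_iff.mp (hp.out.odd_of_ne_two (by omega))
  have hnp : 2 * n + 1 = p := by omega
  have hppos : (0 : ℝ) < p := by positivity
  have hp1 : (1 : ℝ) < p := by exact_mod_cast by omega
  have hpne : (p : ℝ) ≠ 0 := ne_of_gt hppos
  -- not dividing facts
  have hndvd : ∀ i ∈ Finset.range n, ¬ p ∣ (i + 1) := by
    intro i hi hdvd
    have := Nat.le_of_dvd (by omega) hdvd
    have := Finset.mem_range.mp hi
    omega
  -- rewrite the rational expression as a product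
  have hE : ((ascPochhammer ℚ n).eval (1 + (p : ℚ) / 2) *
        (ascPochhammer ℚ n).eval (1 - (p : ℚ) / 2) /
        ((ascPochhammer ℚ n).eval 1) ^ 2 : ℚ)
      = ∏ i ∈ Finset.range n,
          ((1 + (p : ℚ) / 2 + i) * (1 - (p : ℚ) / 2 + i) / (1 + (i : ℚ)) ^ 2) := by
    rw [asc_eval_prod, asc_eval_prod, asc_eval_prod, ← Finset.prod_mul_distrib,
      ← Finset.prod_pow, ← Finset.prod_div_distrib]
  -- the p-adic factors
  set u : ℕ → ℚ_[p] := fun i => -((p : ℚ_[p]) ^ 2 / 4) * ((1 + (i : ℚ_[p]))⁻¹) ^ 2 with hu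
  have hcne : ∀ i : ℕ, (1 + (i : ℚ_[p])) ≠ 0 := by
    intro i
    have : ((i + 1 : ℕ) : ℚ_[p]) ≠ 0 := Nat.cast_ne_zero.mpr (by omega)
    push_cast at this
    rw [add_comm] at this
    exact this
  have hcast : (((ascPochhammer ℚ n).eval (1 + (p : ℚ) / 2) *
        (ascPochhammer ℚ n).eval (1 - (p : ℚ) / 2) /
        ((ascPochhammer ℚ n).eval 1) ^ 2 : ℚ) : ℚ_[p])
      = ∏ i ∈ Finset.range n, (1 + u i) := by
    rw [hE]
    push_cast
    apply Finset.prod_congr rfl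
    intro i _
    have hinv : ((1 + (i:ℚ_[p]))⁻¹) ^ 2 * (1 + (i:ℚ_[p])) ^ 2 = 1 := by
      rw [← mul_pow, inv_mul_cancel₀ (hcne i), one_pow]
    rw [div_eq_iff (pow_ne_zero 2 (hcne i)), hu]
    linear_combination ((p:ℚ_[p]) ^ 2 / 4) * hinv
  rw [hcast]
  -- norms of factors
  have hcnorm : ∀ i ∈ Finset.range n, ‖(1 + (i : ℚ_[p]))‖ = 1 := by
    intro i hi
    have : (1 + (i : ℚ_[p])) = ((i + 1 : ℕ) : ℚ_[p]) := by push_cast; ring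
    rw [this]
    exact norm_natCast_eq_one p _ (hndvd i hi)
  have h4norm : ‖(4 : ℚ_[p])‖ = 1 := by
    have : ((4 : ℕ) : ℚ_[p]) = 4 := by norm_num
    rw [← this]
    apply norm_natCast_eq_one
    intro h
    have h1 := Nat.le_of_dvd (by norm_num) h
    omega
  have he2 : (p : ℝ) ^ (-2 : ℤ) = ((p : ℝ) ^ 2)⁻¹ := by
    rw [zpow_neg, show ((2:ℤ)) = ((2:ℕ):ℤ) from rfl, zpow_natCast]
  have hunorm : ∀ i ∈ Finset.range n, ‖u i‖ = (p : ℝ) ^ (-2 : ℤ) := by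
    intro i hi
    rw [hu]
    simp only [norm_neg, norm_mul, norm_div, norm_pow, norm_inv, Padic.norm_p,
      hcnorm i hi, h4norm]
    rw [he2]
    norm_num [inv_pow]
  have hε0 : (0 : ℝ) ≤ (p : ℝ) ^ (-2 : ℤ) := by positivity
  have hε1 : (p : ℝ) ^ (-2 : ℤ) ≤ 1 := by
    rw [he2]
    apply inv_le_one_of_one_le₀
    nlinarith
  -- remainder estimate
  have hR := prod_one_add_remainder (Finset.range n) u ((p : ℝ) ^ (-2 : ℤ)) hε0 hε1
    (fun i hi => le_of_eq (hunorm i hi))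
  -- sum estimate
  set S : ℚ_[p] := ∑ i ∈ Finset.range n, ((1 + (i : ℚ_[p]))⁻¹) ^ 2 with hS
  have hsum_eq : ∑ i ∈ Finset.range n, u i = -((p : ℚ_[p]) ^ 2 / 4) * S := by
    rw [hS, Finset.mul_sum]
  -- S norm via integer sum
  set N : ℕ := ∑ i ∈ Finset.range n, (n.factorial ^ 2 / (i + 1) ^ 2) with hNdef
  have hdvdfac : ∀ i ∈ Finset.range n, (i + 1) ^ 2 ∣ n.factorial ^ 2 := by
    intro i hi
    exact pow_dvd_pow_of_dvd (Nat.dvd_factorial (by omega) (by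
      have := Finset.mem_range.mp hi; omega)) 2
  have hNS : ((N : ℕ) : ℚ_[p]) = ((n.factorial : ℚ_[p])) ^ 2 * S := by
    rw [hNdef, Nat.cast_sum, hS, Finset.mul_sum]
    apply Finset.sum_congr rfl
    intro i hi
    rw [Nat.cast_div (hdvdfac i hi) (by
      exact_mod_cast pow_ne_zero 2 (Nat.cast_ne_zero.mpr (show i + 1 ≠ 0 by omega)))]
    push_cast
    rw [div_eq_mul_inv, ← inv_pow]
    ring_nf
  have hfacnorm : ‖(n.factorial : ℚ_[p])‖ = 1 := by
    apply norm_natCast_eq_one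
    rw [hp.out.dvd_factorial]
    omega
  -- p divides N
  have hpN : p ∣ N := by
    rw [← ZMod.natCast_eq_zero_iff]
    rw [hNdef, Nat.cast_sum]
    have hstep : ∀ i ∈ Finset.range n,
        ((n.factorial ^ 2 / (i + 1) ^ 2 : ℕ) : ZMod p)
          = (n.factorial : ZMod p) ^ 2 * ((1 + (i : ZMod p))⁻¹) ^ 2 := by
      intro i hi
      have hmul : (n.factorial ^ 2 / (i + 1) ^ 2) * (i + 1) ^ 2 = n.factorial ^ 2 :=
        Nat.div_mul_cancel (hdvdfac i hi)
      have hcast := congrArg (Nat.cast : ℕ → ZMod p) hmul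
      push_cast at hcast
      have hne : ((i : ZMod p) + 1) ≠ 0 := by
        have : (((i + 1 : ℕ)) : ZMod p) ≠ 0 := by
          rw [Ne, ZMod.natCast_eq_zero_iff]
          exact hndvd i hi
        push_cast at this
        exact this
      have hne' : (1 + (i : ZMod p)) ≠ 0 := by rwa [add_comm]
      field_simp
      linear_combination hcast
    rw [Finset.sum_congr rfl hstep, ← Finset.mul_sum, zmod_inv_sq_sum p hp5, mul_zero]
  have hNnorm : ‖(N : ℚ_[p])‖ ≤ (p : ℝ) ^ (-1 : ℤ) := by
    have : ‖((N : ℤ) : ℚ_[p])‖ ≤ (p : ℝ) ^ (-(1:ℕ) : ℤ) := by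
      rw [Padic.norm_int_le_pow_iff_dvd]
      exact_mod_cast pow_one p ▸ (Int.natCast_dvd_natCast.mpr hpN)
    push_cast at this
    exact_mod_cast this
  have hSnorm : ‖S‖ ≤ (p : ℝ) ^ (-1 : ℤ) := by
    have h1 : ‖(N : ℚ_[p])‖ = ‖S‖ := by
      rw [hNS, norm_mul, norm_pow, hfacnorm]; norm_num
    rw [← h1]
    exact hNnorm
  have hsumnorm : ‖∑ i ∈ Finset.range n, u i‖ ≤ (p : ℝ) ^ (-3 : ℤ) := by
    rw [hsum_eq, norm_mul, norm_neg, norm_div, norm_pow, Padic.norm_p, h4norm]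
    have h2 : ((p : ℝ)⁻¹) ^ 2 / 1 = (p : ℝ) ^ (-2 : ℤ) := by
      rw [div_one, he2]; exact inv_pow _ _
    rw [h2]
    calc (p:ℝ)^(-2:ℤ) * ‖S‖ ≤ (p:ℝ)^(-2:ℤ) * (p:ℝ)^(-1:ℤ) :=
          mul_le_mul_of_nonneg_left hSnorm hε0
      _ = (p:ℝ)^(-3:ℤ) := by rw [← zpow_add₀ hpne]; norm_num
  have hsplit2 : ∏ i ∈ Finset.range n, (1 + u i) - 1
      = (∏ i ∈ Finset.range n, (1 + u i) - (1 + ∑ i ∈ Finset.range n, u i))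
        + ∑ i ∈ Finset.range n, u i := by ring
  rw [hsplit2]
  refine le_trans (Padic.nonarchimedean _ _) (max_le (le_trans hR ?_) hsumnorm)
  have h4 : ((p:ℝ)^(-2:ℤ))^2 = (p:ℝ)^(-4:ℤ) := by
    rw [← zpow_natCast (((p:ℝ))^(-2:ℤ)) 2, ← zpow_mul]; norm_num
  rw [h4]
  have : (p:ℝ)^(-4:ℤ) * 1 ≤ (p:ℝ)^(-4:ℤ) * (p:ℝ)^(1:ℤ) := by
    apply mul_le_mul_of_nonneg_left _ (by positivity)
    simpa using hp1.le
  calc (p:ℝ)^(-4:ℤ) = (p:ℝ)^(-4:ℤ) * 1 := (mul_one _).symm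
    _ ≤ (p:ℝ)^(-4:ℤ) * (p:ℝ)^(1:ℤ) := this
    _ = (p:ℝ)^(-3:ℤ) := by rw [← zpow_add₀ hpne]; norm_num
end

section
/- Let i be a primitive fourth root of unity, p a prime, u, v integers, and k a natural number. Then (u+vp)_k (u−vp)_k (u+vpi)_k (u−vpi)_k ≡ ((u)_k)⁴ (mod p⁴) in the ring ℤ[i] of Gaussian integers. -/
open Polynomial

private lemma coeff_comp_neg_X {R : Type*} [CommRing R] (Q : R[X]) (n : ℕ) :
    (Q.comp (-X)).coeff n = (-1) ^ n * Q.coeff n := by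
  induction Q using Polynomial.induction_on' with
  | add p q hp hq => simp [add_comp, hp, hq, mul_add]
  | monomial m a =>
    have hc : (monomial m a).comp (-X) = C ((-1 : R) ^ m * a) * X ^ m := by
      rw [monomial_comp, neg_pow, C_mul, C_pow, C_neg, C_1]
      ring
    rw [hc, coeff_C_mul_X_pow, coeff_monomial]
    by_cases h : n = m
    · subst h; simp
    · rw [if_neg h, if_neg (Ne.symm h), mul_zero]

theorem pochhammer_fourth_congr (p : ℕ) (hp : p.Prime) (u v : ℤ) (k : ℕ) :
    (p : GaussianInt) ^ 4 ∣
      (ascPochhammer GaussianInt k).eval ((u : GaussianInt) + v * p) *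
        (ascPochhammer GaussianInt k).eval ((u : GaussianInt) - v * p) *
        (ascPochhammer GaussianInt k).eval ((u : GaussianInt) + (v : GaussianInt) * (p : GaussianInt) * (Zsqrtd.sqrtd : GaussianInt)) *
        (ascPochhammer GaussianInt k).eval ((u : GaussianInt) - (v : GaussianInt) * (p : GaussianInt) * (Zsqrtd.sqrtd : GaussianInt)) -
      ((ascPochhammer GaussianInt k).eval (u : GaussianInt)) ^ 4 := by
  set P : Polynomial GaussianInt := ascPochhammer GaussianInt k with hP
  set Q : Polynomial GaussianInt :=
    (P.comp (C (u : GaussianInt) + X)) * (P.comp (C (u : GaussianInt) - X)) with hQdef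
  -- Q is even
  have hQ : Q.comp (-X) = Q := by
    rw [hQdef, mul_comp, comp_assoc, comp_assoc]
    have h1 : (C (u : GaussianInt) + X).comp (-X) = C (u : GaussianInt) - X := by
      simp [sub_eq_add_neg]
    have h2 : (C (u : GaussianInt) - X).comp (-X) = C (u : GaussianInt) + X := by
      simp [sub_eq_add_neg]
    rw [h1, h2, mul_comm]
  have hodd : ∀ n, Odd n → Q.coeff n = 0 := by
    intro n hn
    have h := coeff_comp_neg_X Q n
    rw [hQ, Odd.neg_one_pow hn, neg_one_mul] at h
    have : (2 : GaussianInt) * Q.coeff n = 0 := by linear_combination h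
    rcases mul_eq_zero.1 this with h2 | h0
    · exact absurd h2 two_ne_zero
    · exact h0
  -- key evaluation lemma
  have key : ∀ x : GaussianInt, (p : GaussianInt) ∣ x →
      (p : GaussianInt) ^ 4 ∣ Q.eval x - (Q.coeff 0 + Q.coeff 2 * x ^ 2) := by
    intro x hx
    have hN : Q.natDegree < Q.natDegree + 3 := by omega
    set N := Q.natDegree + 3 with hNdef
    rw [Polynomial.eval_eq_sum_range' hN]
    have hsplit : (Finset.range N).filter (fun n => n = 0 ∨ n = 2) = {0, 2} := by
      ext n
      simp only [Finset.mem_filter, Finset.mem_range, Finset.mem_insert, Finset.mem_singleton]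
      constructor
      · rintro ⟨_, h⟩; exact h
      · rintro (rfl | rfl) <;> constructor <;> omega
    have := Finset.sum_filter_add_sum_filter_not (Finset.range N)
      (fun n => n = 0 ∨ n = 2) (fun n => Q.coeff n * x ^ n)
    rw [← this, hsplit]
    have hpair : ∑ n ∈ ({0, 2} : Finset ℕ), Q.coeff n * x ^ n
        = Q.coeff 0 + Q.coeff 2 * x ^ 2 := by
      rw [Finset.sum_pair (by norm_num : (0 : ℕ) ≠ 2)]
      ring
    rw [hpair, add_sub_cancel_left]
    apply Finset.dvd_sum
    intro n hn
    simp only [Finset.mem_filter, Finset.mem_range] at hn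
    obtain ⟨hnN, hn02⟩ := hn
    push_neg at hn02
    rcases Nat.even_or_odd n with he | ho
    · have h4 : 4 ≤ n := by
        rcases he with ⟨m, rfl⟩
        omega
      have : (p : GaussianInt) ^ 4 ∣ x ^ n :=
        dvd_trans (pow_dvd_pow_of_dvd hx 4) (pow_dvd_pow x h4)
      exact this.mul_left _
    · rw [hodd n ho, zero_mul]
      exact dvd_zero _
  -- set up the two evaluation points
  set x1 : GaussianInt := (v : GaussianInt) * (p : GaussianInt) with hx1
  set x2 : GaussianInt := (v : GaussianInt) * (p : GaussianInt) * Zsqrtd.sqrtd with hx2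
  have hd1 : (p : GaussianInt) ∣ x1 := ⟨(v : GaussianInt), mul_comm _ _⟩
  have hd2 : (p : GaussianInt) ∣ x2 := ⟨(v : GaussianInt) * Zsqrtd.sqrtd, by ring⟩
  have hi : (Zsqrtd.sqrtd : GaussianInt) ^ 2 = -1 := by
    have : (Zsqrtd.sqrtd : GaussianInt) * Zsqrtd.sqrtd = -1 := by
      ext <;> simp [Zsqrtd.re_mul, Zsqrtd.im_mul]
    rw [pow_two, this]
  have hx1sq : x1 ^ 2 = (v : GaussianInt) ^ 2 * (p : GaussianInt) ^ 2 := by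
    rw [hx1]; ring
  have hx2sq : x2 ^ 2 = -((v : GaussianInt) ^ 2 * (p : GaussianInt) ^ 2) := by
    rw [hx2, mul_pow, hi]; ring
  obtain ⟨r1, h1⟩ := key x1 hd1
  obtain ⟨r2, h2⟩ := key x2 hd2
  have hev : ∀ x : GaussianInt, Q.eval x = P.eval ((u : GaussianInt) + x) * P.eval ((u : GaussianInt) - x) := by
    intro x
    simp [hQdef, eval_comp]
  have hA : Q.coeff 0 = (P.eval (u : GaussianInt)) ^ 2 := by
    rw [Polynomial.coeff_zero_eq_eval_zero, hev 0]
    ring_nf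
  set A : GaussianInt := Q.coeff 0 with hAdef
  set B : GaussianInt := Q.coeff 2 with hBdef
  have goal_eq :
      P.eval ((u : GaussianInt) + v * p) * P.eval ((u : GaussianInt) - v * p) *
        P.eval ((u : GaussianInt) + (v : GaussianInt) * (p : GaussianInt) * Zsqrtd.sqrtd) *
        P.eval ((u : GaussianInt) - (v : GaussianInt) * (p : GaussianInt) * Zsqrtd.sqrtd)
      = Q.eval x1 * Q.eval x2 := by
    rw [hev x1, hev x2, hx1, hx2]
    push_cast
    ring
  rw [goal_eq]
  have hA4 : (P.eval (u : GaussianInt)) ^ 4 = A ^ 2 := by rw [hA]; ring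
  rw [hA4]
  refine ⟨(A + B * x1 ^ 2) * r2 + (A + B * x2 ^ 2) * r1 + (p : GaussianInt) ^ 4 * r1 * r2
    - B ^ 2 * (v : GaussianInt) ^ 4, ?_⟩
  have e1 : Q.eval x1 = A + B * x1 ^ 2 + (p : GaussianInt) ^ 4 * r1 := by
    linear_combination h1
  have e2 : Q.eval x2 = A + B * x2 ^ 2 + (p : GaussianInt) ^ 4 * r2 := by
    linear_combination h2
  rw [e1, e2, hx1sq, hx2sq]
  ring
end
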